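/- arXiv:1603.06992 — 3 statements merged into one kernel-verified Lean document; each statement's English description precedes it below -/
import Mathlib

section
/- Let V and H be complex Hilbert spaces such that V is continuously embedded as a dense subspace of H. Let a : V × V → ℂ be a continuous sesquilinear form, and assume there exist a constant α > 0 and bounded linear operators Φ₁, Φ₂ : V → V such that for all u ∈ V one has |a(u,u)| + |a(u,Φ₁ u)| ≥ α‖u‖_V² and |a(u,u)| + |a(Φ₂ u, u)| ≥ α‖u‖_V². Assume further that Φ₁ extends to a bounded linear operator on H. Then there exists a closed, densely defined (unbounded) linear operator S on H whose domain is D(S) = { u ∈ V : the antilinear map v ↦ a(u,v) extends continuously to H }, and such that a(u,v) = ⟨S u, v⟩_H for all u ∈ D(S) and all v ∈ V. -/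
open scoped InnerProductSpace NNReal
open ContinuousLinearMap

/-!
Riesz representation turns the form into a bounded operator `T` with `a u v = ⟪v, T u⟫`. The two
generalized coercivity estimates bound `T` and `T†` from below, so `T` is invertible. Then
`A = j T⁻¹ j†` is a bounded injective operator on `H` with dense range (its adjoint `j T⁻¹† j†` is
injective as well), and `S` is the inverse of `A` on its range: the graph of `S` is the transposed
graph of the continuous map `A`, hence closed. Finally `A f = j u` says exactly that
`a u v = ⟪j v, f⟫` for all `v`, and by density of `j` and Riesz representation on `H` this
identifies the range of `A` with the domain described in the statement.
-/

section

variable {𝕜 E F : Type*} [RCLike 𝕜]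

namespace ContinuousLinearMap

variable [NormedAddCommGroup E] [InnerProductSpace 𝕜 E] [CompleteSpace E]

theorem denseRange_iff_injective_adjoint [NormedAddCommGroup F] [InnerProductSpace 𝕜 F]
    [CompleteSpace F] (A : E →L[𝕜] F) :
    DenseRange A ↔ Function.Injective (adjoint A) := by
  change Dense (LinearMap.range (A : E →ₗ[𝕜] F) : Set F) ↔
    Function.Injective (adjoint A : F →ₗ[𝕜] E)
  rw [Submodule.dense_iff_topologicalClosure_eq_top,
    Submodule.topologicalClosure_eq_top_iff, A.orthogonal_range]
  exact LinearMap.ker_eq_bot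

theorem bijective_of_antilipschitz_of_injective_adjoint {K : ℝ≥0} (T : E →L[𝕜] E)
    (hT : AntilipschitzWith K T) (hT' : Function.Injective (adjoint T)) :
    Function.Bijective T := by
  refine ⟨hT.injective, ?_⟩
  have hclosed : IsClosed (Set.range T) := hT.isClosed_range T.uniformContinuous
  rw [← Set.range_eq_univ, ← hclosed.closure_eq]
  exact (T.denseRange_iff_injective_adjoint.2 hT').closure_eq

end ContinuousLinearMap

section

variable [NormedAddCommGroup E] [InnerProductSpace 𝕜 E]

theorem mul_norm_le_of_coercive_pair {α : ℝ} (T Φ : E →L[𝕜] E)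
    (h : ∀ u, α * ‖u‖ ^ 2 ≤ ‖⟪u, T u⟫_𝕜‖ + ‖⟪Φ u, T u⟫_𝕜‖) (u : E) :
    α * ‖u‖ ≤ (1 + ‖Φ‖) * ‖T u‖ := by
  rcases (norm_nonneg u).eq_or_lt with hu | hu
  · rw [← hu, mul_zero]; positivity
  refine le_of_mul_le_mul_right ?_ hu
  calc α * ‖u‖ * ‖u‖ = α * ‖u‖ ^ 2 := by ring
    _ ≤ ‖⟪u, T u⟫_𝕜‖ + ‖⟪Φ u, T u⟫_𝕜‖ := h u
    _ ≤ ‖u‖ * ‖T u‖ + ‖Φ‖ * ‖u‖ * ‖T u‖ := by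
      gcongr
      · exact norm_inner_le_norm _ _
      · exact (norm_inner_le_norm _ _).trans (by gcongr; exact Φ.le_opNorm u)
    _ = (1 + ‖Φ‖) * ‖T u‖ * ‖u‖ := by ring

theorem antilipschitz_of_coercive_pair {α : ℝ} (hα : 0 < α) (T Φ : E →L[𝕜] E)
    (h : ∀ u, α * ‖u‖ ^ 2 ≤ ‖⟪u, T u⟫_𝕜‖ + ‖⟪Φ u, T u⟫_𝕜‖) :
    ∃ K, AntilipschitzWith K T := by
  refine ⟨((1 + ‖Φ‖) / α).toNNReal, T.antilipschitz_of_bound fun u => ?_⟩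
  rw [Real.coe_toNNReal _ (by positivity), div_mul_eq_mul_div, le_div_iff₀ hα, mul_comm]
  exact mul_norm_le_of_coercive_pair T Φ h u

end

theorem exists_eq_inner_of_bounded_sesquilinear [NormedAddCommGroup E] [InnerProductSpace 𝕜 E]
    [CompleteSpace E] (a : E → E → 𝕜)
    (add_left : ∀ u u' v, a (u + u') v = a u v + a u' v)
    (add_right : ∀ u v v', a u (v + v') = a u v + a u v')
    (smul_left : ∀ (c : 𝕜) u v, a (c • u) v = c * a u v)
    (smul_right : ∀ (c : 𝕜) u v, a u (c • v) = starRingEnd 𝕜 c * a u v)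
    {C : ℝ} (bound : ∀ u v, ‖a u v‖ ≤ C * ‖u‖ * ‖v‖) :
    ∃ T : E →L[𝕜] E, a = fun u v => ⟪v, T u⟫_𝕜 := by
  let B : E →L⋆[𝕜] E →L[𝕜] 𝕜 :=
    (LinearMap.mk₂'ₛₗ (starRingEnd 𝕜) (RingHom.id 𝕜) (fun u v => starRingEnd 𝕜 (a u v))
      (fun u u' v => by simp [add_left]) (fun c u v => by simp [smul_left])
      (fun u v v' => by simp [add_right]) (fun c u v => by simp [smul_right])).mkContinuous₂ C
      (fun u v => by simpa using bound u v)
  refine ⟨InnerProductSpace.continuousLinearMapOfBilin B, funext₂ fun u v => ?_⟩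
  rw [← inner_conj_symm, InnerProductSpace.continuousLinearMapOfBilin_apply]
  simp [B]

theorem DenseRange.exists_continuousLinearMap_coe_eq {R M N P : Type*} [Semiring R]
    [AddCommMonoid M] [Module R M]
    [TopologicalSpace N] [AddCommMonoid N] [Module R N] [ContinuousAdd N] [ContinuousConstSMul R N]
    [TopologicalSpace P] [T2Space P] [AddCommMonoid P] [Module R P] [ContinuousAdd P]
    [ContinuousConstSMul R P] {j : M →ₗ[R] N} (hj : DenseRange j) {φ : N → P}
    (hφ : Continuous φ) (ψ : M →ₗ[R] P) (h : ∀ v, φ (j v) = ψ v) :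
    ∃ L : N →L[R] P, ⇑L = φ := by
  have map_add : ∀ x y, φ (x + y) = φ x + φ y := by
    refine hj.induction_on₂ (isClosed_eq ?_ ?_) fun v w => ?_
    · fun_prop
    · fun_prop
    · rw [← map_add, h, h, h, map_add]
  have map_smul : ∀ (c : R) x, φ (c • x) = c • φ x := fun c x => by
    refine hj.induction_on x (isClosed_eq ?_ ?_) fun v => ?_
    · fun_prop
    · fun_prop
    · rw [← LinearMap.map_smul, h, h, LinearMap.map_smul]
  exact ⟨{ toFun := φ, map_add' := map_add, map_smul' := map_smul, cont := hφ }, rfl⟩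

theorem DenseRange.exists_eq_inner_of_continuous [AddCommMonoid E] [Module 𝕜 E]
    [NormedAddCommGroup F] [InnerProductSpace 𝕜 F] [CompleteSpace F]
    {j : E →ₗ[𝕜] F} (hj : DenseRange j) {φ : F → 𝕜} (hφ : Continuous φ) (ψ : E →ₗ[𝕜] 𝕜)
    (h : ∀ v, φ (j v) = starRingEnd 𝕜 (ψ v)) : ∃ f : F, ∀ x, φ x = ⟪x, f⟫_𝕜 := by
  obtain ⟨L, hL⟩ := hj.exists_continuousLinearMap_coe_eq (φ := fun x => starRingEnd 𝕜 (φ x))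
    (RCLike.continuous_conj.comp hφ) ψ (fun v => by simp [h])
  refine ⟨(InnerProductSpace.toDual 𝕜 F).symm L, fun x => ?_⟩
  rw [← inner_conj_symm, InnerProductSpace.toDual_symm_apply, hL, RCLike.conj_conj]

theorem LinearEquiv.isClosed_graph_ofInjective_symm {R : Type*} [Semiring R] [TopologicalSpace E]
    [AddCommMonoid E] [Module R E] [TopologicalSpace F] [T2Space F] [AddCommMonoid F] [Module R F]
    (A : E →L[R] F) (hA : Function.Injective A) :
    IsClosed {p : F × E | ∃ x : LinearMap.range (A : E →ₗ[R] F),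
      p.1 = x ∧ p.2 = (LinearEquiv.ofInjective (A : E →ₗ[R] F) hA).symm x} := by
  convert isClosed_eq continuous_fst (A.continuous.comp continuous_snd) using 1
  ext ⟨y, x⟩
  constructor
  · rintro ⟨z, rfl, rfl⟩
    exact (LinearEquiv.ofInjective_symm_apply (f := (A : E →ₗ[R] F)) z).symm
  · rintro (rfl : y = A x)
    exact ⟨LinearEquiv.ofInjective (A : E →ₗ[R] F) hA x, rfl, by simp⟩

section

variable [NormedAddCommGroup E] [InnerProductSpace 𝕜 E] [CompleteSpace E]
  [NormedAddCommGroup F] [InnerProductSpace 𝕜 F] [CompleteSpace F]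
  (j : E →L[𝕜] F) (T : E ≃L[𝕜] E)

noncomputable def laxMilgramInverse : F →L[𝕜] F :=
  j ∘L (T.symm : E →L[𝕜] E) ∘L adjoint j

variable {j}

theorem laxMilgramInverse_apply_eq_iff (hj : Function.Injective j) (f : F) (u : E) :
    laxMilgramInverse j T f = j u ↔ ∀ v, ⟪v, T u⟫_𝕜 = ⟪j v, f⟫_𝕜 := by
  simp only [laxMilgramInverse, coe_comp, Function.comp_apply, ContinuousLinearEquiv.coe_coe,
    hj.eq_iff, T.symm_apply_eq, ← adjoint_inner_right]
  exact ⟨fun h v => by rw [h], fun h => (ext_inner_left 𝕜 h).symm⟩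

theorem injective_laxMilgramInverse (hj : Function.Injective j) (hj_dense : DenseRange j) :
    Function.Injective (laxMilgramInverse j T) :=
  hj.comp <| T.symm.injective.comp <| j.denseRange_iff_injective_adjoint.1 hj_dense

theorem denseRange_laxMilgramInverse (hj : Function.Injective j) (hj_dense : DenseRange j) :
    DenseRange (laxMilgramInverse j T) := by
  rw [denseRange_iff_injective_adjoint, laxMilgramInverse, adjoint_comp, adjoint_comp,
    adjoint_adjoint, coe_comp, coe_comp]
  exact (hj.comp <| (T.symm : E →L[𝕜] E).denseRange_iff_injective_adjoint.1
    T.symm.surjective.denseRange).comp (j.denseRange_iff_injective_adjoint.1 hj_dense)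

theorem coe_range_laxMilgramInverse (hj : Function.Injective j) (hj_dense : DenseRange j) :
    (LinearMap.range (laxMilgramInverse j T : F →ₗ[𝕜] F) : Set F) = {h | ∃ u, j u = h ∧
      ∃ φ : F → 𝕜, Continuous φ ∧ ∀ v, φ (j v) = ⟪v, T u⟫_𝕜} := by
  ext h
  constructor
  · rintro ⟨f, rfl⟩
    refine ⟨T.symm (adjoint j f), rfl, (⟪·, f⟫_𝕜), by fun_prop, fun v => ?_⟩
    exact ((laxMilgramInverse_apply_eq_iff T hj f _).1 rfl v).symm
  · rintro ⟨u, rfl, φ, hφ, hφj⟩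
    obtain ⟨f, hf⟩ := hj_dense.exists_eq_inner_of_continuous (j := (j : E →ₗ[𝕜] F)) hφ
      (innerSL 𝕜 (T u) : E →ₗ[𝕜] 𝕜) (fun v => by simp [hφj])
    exact ⟨f, (laxMilgramInverse_apply_eq_iff T hj f u).2 fun v => by rw [← hφj, hf]⟩

end

end

theorem generalized_lax_milgram_general
    {V H : Type*} [NormedAddCommGroup V] [InnerProductSpace ℂ V] [CompleteSpace V]
    [NormedAddCommGroup H] [InnerProductSpace ℂ H] [CompleteSpace H]
    (j : V →L[ℂ] H) (hj_inj : Function.Injective j) (hj_dense : DenseRange j)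
    (a : V → V → ℂ)
    (ha_add_left : ∀ u u' v : V, a (u + u') v = a u v + a u' v)
    (ha_add_right : ∀ u v v' : V, a u (v + v') = a u v + a u v')
    (ha_smul_left : ∀ (c : ℂ) (u v : V), a (c • u) v = c * a u v)
    (ha_smul_right : ∀ (c : ℂ) (u v : V), a u (c • v) = (starRingEnd ℂ) c * a u v)
    (ha_cont : ∃ c > (0:ℝ), ∀ u v : V, ‖a u v‖ ≤ c * ‖u‖ * ‖v‖)
    (α : ℝ) (hα : 0 < α) (Φ₁ Φ₂ : V →L[ℂ] V)
    (hcoer₁ : ∀ u : V, α * ‖u‖ ^ 2 ≤ ‖a u u‖ + ‖a u (Φ₁ u)‖)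
    (hcoer₂ : ∀ u : V, α * ‖u‖ ^ 2 ≤ ‖a u u‖ + ‖a (Φ₂ u) u‖) :
    ∃ (D : Submodule ℂ H) (S : D →ₗ[ℂ] H),
      Dense (D : Set H) ∧
      IsClosed {p : H × H | ∃ x : D, p.1 = (x : H) ∧ p.2 = S x} ∧
      (D : Set H) = {h : H | ∃ u : V, j u = h ∧
        ∃ φ : H → ℂ, Continuous φ ∧ ∀ v : V, φ (j v) = a u v} ∧
      ∀ (u : V) (hu : j u ∈ D), ∀ v : V, a u v = ⟪j v, S ⟨j u, hu⟩⟫_ℂ := by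
  obtain ⟨_, -, ha_bound⟩ := ha_cont
  obtain ⟨T, rfl⟩ := exists_eq_inner_of_bounded_sesquilinear a ha_add_left ha_add_right
    ha_smul_left ha_smul_right ha_bound
  obtain ⟨_, hT⟩ := antilipschitz_of_coercive_pair hα T Φ₁ hcoer₁
  obtain ⟨_, hT_adjoint⟩ := antilipschitz_of_coercive_pair hα (adjoint T) Φ₂ fun u => by
    rw [adjoint_inner_right, adjoint_inner_right, norm_inner_symm, norm_inner_symm (T (Φ₂ u))]
    exact hcoer₂ u
  have hT_bij := T.bijective_of_antilipschitz_of_injective_adjoint hT hT_adjoint.injective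
  let T' := ContinuousLinearEquiv.ofBijective T (LinearMap.ker_eq_bot.2 hT_bij.1)
    (LinearMap.range_eq_top.2 hT_bij.2)
  have hA := injective_laxMilgramInverse T' hj_inj hj_dense
  refine ⟨LinearMap.range (laxMilgramInverse j T' : H →ₗ[ℂ] H),
    (LinearEquiv.ofInjective _ hA).symm.toLinearMap, denseRange_laxMilgramInverse T' hj_inj hj_dense,
    LinearEquiv.isClosed_graph_ofInjective_symm _ hA, coe_range_laxMilgramInverse T' hj_inj hj_dense,
    fun u hu v => (laxMilgramInverse_apply_eq_iff T' hj_inj _ u).1 ?_ v⟩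
  exact LinearEquiv.ofInjective_symm_apply (f := (laxMilgramInverse j T' : H →ₗ[ℂ] H)) _

/-- **Generalized Lax–Milgram theorem** (Almog–Helffer).
Let `V`, `H` be complex Hilbert spaces with `V` continuously embedded (via `j`) as a dense
subspace of `H`.  Let `a` be a continuous sesquilinear form on `V × V` (linear in the first
variable, antilinear in the second), and suppose there are `α > 0` and bounded operators
`Φ₁, Φ₂` on `V` with `|a(u,u)| + |a(u,Φ₁u)| ≥ α‖u‖²` and `|a(u,u)| + |a(Φ₂u,u)| ≥ α‖u‖²`
for all `u ∈ V`, and that `Φ₁` extends to a bounded operator on `H`.  Then there is a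
closed, densely defined operator `S` on `H` with domain
`D(S) = { u ∈ V : v ↦ a(u,v) extends continuously to H }` such that
`a(u,v) = ⟨Su, v⟩_H` for all `u ∈ D(S)`, `v ∈ V` (the inner product being linear in its
first and antilinear in its second entry, i.e. `⟨x,y⟩_H = ⟪y,x⟫` in Mathlib's convention). -/
theorem generalized_lax_milgram
    {V H : Type*} [NormedAddCommGroup V] [InnerProductSpace ℂ V] [CompleteSpace V]
    [NormedAddCommGroup H] [InnerProductSpace ℂ H] [CompleteSpace H]
    (j : V →L[ℂ] H) (hj_inj : Function.Injective j) (hj_dense : DenseRange j)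
    (a : V → V → ℂ)
    (ha_add_left : ∀ u u' v : V, a (u + u') v = a u v + a u' v)
    (ha_add_right : ∀ u v v' : V, a u (v + v') = a u v + a u v')
    (ha_smul_left : ∀ (c : ℂ) (u v : V), a (c • u) v = c * a u v)
    (ha_smul_right : ∀ (c : ℂ) (u v : V), a u (c • v) = (starRingEnd ℂ) c * a u v)
    (ha_cont : ∃ c > (0:ℝ), ∀ u v : V, ‖a u v‖ ≤ c * ‖u‖ * ‖v‖)
    (α : ℝ) (hα : 0 < α) (Φ₁ Φ₂ : V →L[ℂ] V)
    (hcoer₁ : ∀ u : V, α * ‖u‖ ^ 2 ≤ ‖a u u‖ + ‖a u (Φ₁ u)‖)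
    (hcoer₂ : ∀ u : V, α * ‖u‖ ^ 2 ≤ ‖a u u‖ + ‖a (Φ₂ u) u‖)
    (hΦ₁_ext : ∃ Ψ : H →L[ℂ] H, ∀ u : V, Ψ (j u) = j (Φ₁ u)) :
    ∃ (D : Submodule ℂ H) (S : D →ₗ[ℂ] H),
      Dense (D : Set H) ∧
      IsClosed {p : H × H | ∃ x : D, p.1 = (x : H) ∧ p.2 = S x} ∧
      (D : Set H) = {h : H | ∃ u : V, j u = h ∧
        ∃ φ : H → ℂ, Continuous φ ∧ ∀ v : V, φ (j v) = a u v} ∧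
      ∀ (u : V) (hu : j u ∈ D), ∀ v : V, a u v = ⟪j v, S ⟨j u, hu⟩⟫_ℂ :=
  generalized_lax_milgram_general j hj_inj hj_dense a ha_add_left ha_add_right ha_smul_left
    ha_smul_right ha_cont α hα Φ₁ Φ₂ hcoer₁ hcoer₂
end

section
/- For every z ∈ ℂ one has e^{-iα}·Ai'(e^{-iα}z)·Ai(e^{iα}z) − e^{iα}·Ai'(e^{iα}z)·Ai(e^{-iα}z) = i/(2π). -/
/-!
With `ω = e^{iα}` a primitive cube root of unity, both `z ↦ Ai(ωz)` and `z ↦ Ai(ω⁻¹z)` solve the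
Airy equation `w'' = z w`, so their Wronskian is constant and equals its value at `0`, namely
`(ω⁻¹ - ω) Ai(0) Ai'(0) = -i√3 · (-√3 / (6π))`; the product `Ai(0) Ai'(0)` is evaluated with the
reflection formula `Γ(1/3) Γ(2/3) = 2π/√3`. The Airy equation itself is read off the power series
`Ai = ∑ aₙ zⁿ`, whose coefficients satisfy `(n+3)(n+2) aₙ₊₃ = aₙ`.
-/

noncomputable section

/-- The Airy function, defined by its entire power series. -/
def Ai (z : ℂ) : ℂ :=
  (((3 : ℝ) ^ (-(2:ℝ)/3) / Real.Gamma (2/3) : ℝ) : ℂ) *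
    ∑' k : ℕ, (∏ j ∈ Finset.range k, ((3*j+1 : ℕ) : ℂ)) * z ^ (3*k) / ((3*k).factorial : ℂ)
  + ((-((3 : ℝ) ^ (-(1:ℝ)/3)) / Real.Gamma (1/3) : ℝ) : ℂ) *
    ∑' k : ℕ, (∏ j ∈ Finset.range k, ((3*j+2 : ℕ) : ℂ)) * z ^ (3*k+1) / ((3*k+1).factorial : ℂ)

/-- The derivative of the Airy function. -/
def Ai' (z : ℂ) : ℂ := deriv Ai z

/-- The angle α = 2π/3. -/
def α : ℝ := 2 * Real.pi / 3

open FormalMultilinearSeries Filter Finset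

section PowerSeries

variable {𝕜 : Type*} [NontriviallyNormedField 𝕜]

theorem ofScalars_radius_eq_top_of_norm_add_mul_pow_le {c : ℕ → 𝕜} {k : ℕ} (hk : 0 < k)
    (h : ∀ r : ℝ, ∀ᶠ n in atTop, ‖c (n + k)‖ * r ^ k ≤ ‖c n‖) :
    (ofScalars 𝕜 c).radius = ⊤ := by
  refine ENNReal.eq_top_of_forall_nnreal_le fun r => ?_
  obtain ⟨N, hN⟩ := eventually_atTop.1 (h r)
  set g : ℕ → ℝ := fun n => ‖c n‖ * r ^ n
  have hg (n : ℕ) : g n ≤ ∑ m ∈ range (N + k), g m := by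
    induction n using Nat.strong_induction_on with
    | _ n ih =>
      by_cases hn : n < N + k
      · exact single_le_sum (fun m _ => by positivity) (mem_range.2 hn)
      · obtain ⟨m, rfl⟩ : ∃ m, n = m + k := ⟨n - k, by omega⟩
        calc g (m + k) = ‖c (m + k)‖ * r ^ k * r ^ m := by simp only [g, pow_add]; ring
          _ ≤ ‖c m‖ * r ^ m := by
            gcongr
            exact hN m (by omega)
          _ ≤ _ := ih m (by omega)
  exact le_radius_of_bound _ _ fun n => by simpa [ofScalars_norm] using hg n

def derivCoeffs (c : ℕ → 𝕜) (n : ℕ) : 𝕜 := (n + 1) * c (n + 1)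

theorem ofScalars_derivCoeffs_radius_eq_top {c : ℕ → 𝕜} (hc : (ofScalars 𝕜 c).radius = ⊤) :
    (ofScalars 𝕜 (derivCoeffs c)).radius = ⊤ := by
  refine ENNReal.eq_top_of_forall_nnreal_le fun r => ?_
  set R : NNReal := 2 * max 1 r
  obtain ⟨C, -, hC⟩ :=
    (ofScalars 𝕜 c).norm_mul_pow_le_of_lt_radius (r := R) (hc ▸ ENNReal.coe_lt_top)
  refine le_radius_of_bound _ C fun n => ?_
  have hR : (1 : ℝ) ≤ R := by
    push_cast [R]
    linarith [le_max_left (1 : ℝ) r]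
  have key : ((n : ℝ) + 1) * r ^ n ≤ (R : ℝ) ^ (n + 1) := by
    calc ((n : ℝ) + 1) * r ^ n ≤ 2 ^ n * (max 1 r : ℝ) ^ n := by
          gcongr
          · exact_mod_cast Nat.lt_two_pow_self
          · exact le_max_right _ _
      _ = (R : ℝ) ^ n := by simp [R, mul_pow]
      _ ≤ (R : ℝ) ^ (n + 1) := pow_le_pow_right₀ hR n.le_succ
  have hn : ‖(n + 1 : 𝕜)‖ ≤ n + 1 := by simpa using Nat.norm_cast_le (α := 𝕜) (n + 1)
  calc ‖ofScalars 𝕜 (derivCoeffs c) n‖ * r ^ n ≤ ‖c (n + 1)‖ * (((n : ℝ) + 1) * r ^ n) := by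
        rw [ofScalars_norm, derivCoeffs, norm_mul, mul_comm ‖_‖ ‖c _‖, mul_assoc]
        gcongr
    _ ≤ ‖c (n + 1)‖ * (R : ℝ) ^ (n + 1) := by gcongr
    _ ≤ C := by simpa [ofScalars_norm] using hC (n + 1)

theorem hasDerivAt_ofScalarsSum [CompleteSpace 𝕜] {c : ℕ → 𝕜} (hc : (ofScalars 𝕜 c).radius = ⊤)
    (z : 𝕜) : HasDerivAt (ofScalarsSum c) (ofScalarsSum (derivCoeffs c) z) z := by
  have hf : HasFPowerSeriesOnBall (ofScalars 𝕜 c).sum (ofScalars 𝕜 c) 0 ⊤ := by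
    simpa [hc] using (ofScalars 𝕜 c).hasFPowerSeriesOnBall (by simp [hc])
  have hz : z ∈ Metric.eball (0 : 𝕜) ⊤ := by simp
  have hsum := (ContinuousLinearMap.apply 𝕜 𝕜 1).hasSum (hf.fderiv.hasSum hz)
  simp only [derivSeries_coeff_one, zero_add, apply_eq_pow_smul_coeff, coeff_ofScalars,
    ContinuousLinearMap.apply_apply, FunLike.coe_smul, Pi.smul_apply, smul_eq_mul,
    nsmul_eq_mul, fderiv_apply_one_eq_deriv] at hsum
  have hdiff := (hf.analyticAt_of_mem hz).differentiableAt.hasDerivAt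
  have hderiv : ofScalarsSum (derivCoeffs c) z = deriv (ofScalars 𝕜 c).sum z := by
    rw [ofScalars_sum_eq, ← hsum.tsum_eq]
    exact tsum_congr fun n => by simp [derivCoeffs, mul_comm]
  rw [hderiv]
  exact hdiff

theorem hasSum_ofScalarsSum [CompleteSpace 𝕜] {c : ℕ → 𝕜} (hc : (ofScalars 𝕜 c).radius = ⊤)
    (z : 𝕜) : HasSum (fun n => c n * z ^ n) (ofScalarsSum c z) := by
  show HasSum _ ((ofScalars 𝕜 c).sum z)
  simpa [ofScalars_apply_eq, mul_comm] using (ofScalars 𝕜 c).hasSum (x := z) (by simp [hc])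

theorem ofScalarsSum_eq_mul_of_coeff_succ [CompleteSpace 𝕜] {c d : ℕ → 𝕜}
    (hc : (ofScalars 𝕜 c).radius = ⊤) (hd₀ : d 0 = 0) (hd : ∀ n, d (n + 1) = c n) (z : 𝕜) :
    ofScalarsSum d z = z * ofScalarsSum c z := by
  have hshift : HasSum (fun n => d (n + 1) * z ^ (n + 1)) (z * ofScalarsSum c z) := by
    rw [show (fun n => d (n + 1) * z ^ (n + 1)) = fun n => z * (c n * z ^ n) from
      funext fun n => by rw [hd]; ring]
    exact (hasSum_ofScalarsSum hc z).mul_left z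
  have hsum : HasSum (fun n => d n * z ^ n) (z * ofScalarsSum c z) := by
    have := (hasSum_nat_add_iff (f := fun n => d n * z ^ n) 1).mp hshift
    rwa [sum_range_one, hd₀, zero_mul, add_zero] at this
  rw [ofScalars_sum_eq, ← hsum.tsum_eq]
  simp only [smul_eq_mul]

end PowerSeries

theorem is_const_wronskian_of_hasDerivAt {𝕜 : Type*} [RCLike 𝕜] {u u' v v' q : 𝕜 → 𝕜}
    (hu : ∀ z, HasDerivAt u (u' z) z) (hu' : ∀ z, HasDerivAt u' (q z * u z) z)
    (hv : ∀ z, HasDerivAt v (v' z) z) (hv' : ∀ z, HasDerivAt v' (q z * v z) z) (x y : 𝕜) :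
    u' x * v x - v' x * u x = u' y * v y - v' y * u y := by
  have hW (z : 𝕜) : HasDerivAt (fun z => u' z * v z - v' z * u z) 0 z :=
    (((hu' z).mul (hv z)).sub ((hv' z).mul (hu z))).congr_deriv (by ring)
  exact is_const_of_deriv_eq_zero (fun z => (hW z).differentiableAt) (fun z => (hW z).deriv) x y

def airyCoeff : ℕ → ℂ
  | 0 => (((3 : ℝ) ^ (-(2:ℝ)/3) / Real.Gamma (2/3) : ℝ) : ℂ)
  | 1 => ((-((3 : ℝ) ^ (-(1:ℝ)/3)) / Real.Gamma (1/3) : ℝ) : ℂ)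
  | 2 => 0
  | n + 3 => airyCoeff n / ((n + 3) * (n + 2))

theorem airyCoeff_add_three_mul_factorial (n : ℕ) :
    airyCoeff (n + 3) * (n + 3).factorial = (n + 1) * (airyCoeff n * n.factorial) := by
  have h₃ : (n + 3 : ℂ) ≠ 0 := by norm_cast
  have h₂ : (n + 2 : ℂ) ≠ 0 := by norm_cast
  rw [airyCoeff]
  push_cast [Nat.factorial_succ]
  field_simp
  ring

theorem airyCoeff_add_three_mul (r k : ℕ) :
    airyCoeff (r + 3 * k) = airyCoeff r * r.factorial *
      (∏ j ∈ range k, ((r + 3 * j + 1 : ℕ) : ℂ)) / (r + 3 * k).factorial := by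
  rw [eq_div_iff (Nat.cast_ne_zero.2 (Nat.factorial_ne_zero _))]
  induction k with
  | zero => simp
  | succ k ih =>
    rw [show r + 3 * (k + 1) = r + 3 * k + 3 by ring, airyCoeff_add_three_mul_factorial, ih,
      prod_range_succ]
    push_cast
    ring

theorem ofScalars_airyCoeff_radius_eq_top : (ofScalars ℂ airyCoeff).radius = ⊤ := by
  refine ofScalars_radius_eq_top_of_norm_add_mul_pow_le three_pos fun r => ?_
  filter_upwards [eventually_ge_atTop ⌈r ^ 3⌉₊] with n hn
  have hr : r ^ 3 ≤ (n + 3) * (n + 2) := by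
    have := Nat.le_ceil (r ^ 3)
    have : (⌈r ^ 3⌉₊ : ℝ) ≤ n := by exact_mod_cast hn
    nlinarith
  simp only [airyCoeff]
  have : ‖((n : ℂ) + 3) * (n + 2)‖ = (n + 3) * (n + 2) := by norm_cast
  rw [norm_div, this, div_mul_eq_mul_div, div_le_iff₀ (by positivity)]
  gcongr

theorem Ai_eq_ofScalarsSum : Ai = ofScalarsSum airyCoeff := by
  funext z
  have hsum := hasSum_ofScalarsSum ofScalars_airyCoeff_radius_eq_top z
  -- The residue classes `0` and `1` mod 3 are the two series defining `Ai`; class `2` vanishes.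
  rw [← hsum.tsum_eq, Nat.sumByResidueClasses hsum.summable 3,
    show ∀ f : ZMod 3 → ℂ, ∑ j, f j = f 0 + f 1 + f 2 from Fin.sum_univ_three]
  simp only [show (2 : ZMod 3).val = 2 from rfl, ZMod.val_zero, ZMod.val_one,
    airyCoeff_add_three_mul]
  simp only [airyCoeff, zero_mul, zero_div, tsum_zero, add_zero, Ai, ← tsum_mul_left]
  congr 1 <;> refine tsum_congr fun m => ?_ <;> push_cast <;> ring_nf

theorem Ai'_eq_ofScalarsSum : Ai' = ofScalarsSum (derivCoeffs airyCoeff) :=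
  funext fun z =>
    (Ai_eq_ofScalarsSum ▸ hasDerivAt_ofScalarsSum ofScalars_airyCoeff_radius_eq_top z).deriv

theorem hasDerivAt_Ai (z : ℂ) : HasDerivAt Ai (Ai' z) z := by
  rw [Ai'_eq_ofScalarsSum, Ai_eq_ofScalarsSum]
  exact hasDerivAt_ofScalarsSum ofScalars_airyCoeff_radius_eq_top z

theorem hasDerivAt_Ai' (z : ℂ) : HasDerivAt Ai' (z * Ai z) z := by
  have hcoeff (n : ℕ) : derivCoeffs (derivCoeffs airyCoeff) (n + 1) = airyCoeff n := by
    have h₃ : (n + 3 : ℂ) ≠ 0 := by norm_cast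
    have h₂ : (n + 2 : ℂ) ≠ 0 := by norm_cast
    simp only [derivCoeffs, airyCoeff]
    push_cast
    field_simp
    ring
  rw [Ai'_eq_ofScalarsSum, Ai_eq_ofScalarsSum, ← ofScalarsSum_eq_mul_of_coeff_succ
    ofScalars_airyCoeff_radius_eq_top (by simp [derivCoeffs, airyCoeff]) hcoeff]
  exact hasDerivAt_ofScalarsSum
    (ofScalars_derivCoeffs_radius_eq_top ofScalars_airyCoeff_radius_eq_top) z

theorem Ai_zero : Ai 0 = airyCoeff 0 := by
  simp [Ai_eq_ofScalarsSum, ofScalarsSum_zero]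

theorem Ai'_zero : Ai' 0 = airyCoeff 1 := by
  simp [Ai'_eq_ofScalarsSum, ofScalarsSum_zero, derivCoeffs]

theorem airyCoeff_zero_mul_airyCoeff_one :
    airyCoeff 0 * airyCoeff 1 = -(Real.sqrt 3 / (6 * Real.pi)) := by
  have hΓ : Real.Gamma (1 / 3) * Real.Gamma (2 / 3) = Real.pi / (Real.sqrt 3 / 2) := by
    rw [show (2 / 3 : ℝ) = 1 - 1 / 3 by norm_num, Real.Gamma_mul_Gamma_one_sub,
      show Real.pi * (1 / 3) = Real.pi / 3 by ring, Real.sin_pi_div_three]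
  have hpow : (3 : ℝ) ^ (-(1 : ℝ) / 3) * 3 ^ (-(2 : ℝ) / 3) = 3⁻¹ := by
    rw [← Real.rpow_add three_pos]
    norm_num
  have h : (3 : ℝ) ^ (-(2 : ℝ) / 3) / Real.Gamma (2 / 3) *
      (-(3 : ℝ) ^ (-(1 : ℝ) / 3) / Real.Gamma (1 / 3)) = -(Real.sqrt 3 / (6 * Real.pi)) := by
    calc _ = -((3 : ℝ) ^ (-(1 : ℝ) / 3) * 3 ^ (-(2 : ℝ) / 3)) /
          (Real.Gamma (1 / 3) * Real.Gamma (2 / 3)) := by ring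
      _ = -3⁻¹ / (Real.pi / (Real.sqrt 3 / 2)) := by rw [hpow, hΓ]
      _ = -(Real.sqrt 3 / (6 * Real.pi)) := by
        field_simp
        ring
  simp only [airyCoeff]
  exact_mod_cast h

theorem hasDerivAt_comp_mul_of_airy {f f' : ℂ → ℂ} (hf : ∀ z, HasDerivAt f (f' z) z)
    (hf' : ∀ z, HasDerivAt f' (z * f z) z) {ω : ℂ} (hω : ω ^ 3 = 1) (z : ℂ) :
    HasDerivAt (fun z => f (ω * z)) (ω * f' (ω * z)) z ∧
      HasDerivAt (fun z => ω * f' (ω * z)) (z * f (ω * z)) z := by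
  have hmul : HasDerivAt (fun z => ω * z) ω z := by simpa using (hasDerivAt_id z).const_mul ω
  refine ⟨((hf _).comp z hmul).congr_deriv (mul_comm _ _), ?_⟩
  exact (((hf' _).comp z hmul).const_mul ω).congr_deriv (by linear_combination z * f (ω * z) * hω)

theorem exp_alpha_mul_I_pow_three : Complex.exp (α * Complex.I) ^ 3 = 1 := by
  rw [← Complex.exp_nat_mul, α]
  push_cast
  rw [show (3 : ℂ) * (2 * Real.pi / 3 * Complex.I) = 2 * Real.pi * Complex.I by ring,
    Complex.exp_two_pi_mul_I]

theorem exp_neg_alpha_mul_I_sub_exp_alpha_mul_I :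
    Complex.exp (-α * Complex.I) - Complex.exp (α * Complex.I) = -(Real.sqrt 3 * Complex.I) := by
  have hsin : Real.sin α = Real.sqrt 3 / 2 := by
    rw [α, show 2 * Real.pi / 3 = Real.pi - Real.pi / 3 by ring, Real.sin_pi_sub,
      Real.sin_pi_div_three]
  rw [Complex.exp_mul_I, Complex.exp_mul_I, Complex.cos_neg, Complex.sin_neg,
    ← Complex.ofReal_sin, hsin]
  push_cast
  ring

/-- The Wronskian identity:
`e^{-iα} Ai'(e^{-iα}z) Ai(e^{iα}z) − e^{iα} Ai'(e^{iα}z) Ai(e^{-iα}z) = i/(2π)` for all `z ∈ ℂ`. -/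
theorem airy_wronskian (z : ℂ) :
    Complex.exp (-(α:ℂ) * Complex.I) * Ai' (Complex.exp (-(α:ℂ) * Complex.I) * z) *
        Ai (Complex.exp ((α:ℂ) * Complex.I) * z)
      - Complex.exp ((α:ℂ) * Complex.I) * Ai' (Complex.exp ((α:ℂ) * Complex.I) * z) *
        Ai (Complex.exp (-(α:ℂ) * Complex.I) * z)
    = Complex.I / (2 * Real.pi) := by
  have hω : Complex.exp (α * Complex.I) ^ 3 = 1 := exp_alpha_mul_I_pow_three
  have hω' : Complex.exp (-α * Complex.I) ^ 3 = 1 := by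
    rw [neg_mul, Complex.exp_neg, inv_pow, hω, inv_one]
  obtain ⟨hu, hu'⟩ := forall_and.1 (hasDerivAt_comp_mul_of_airy hasDerivAt_Ai hasDerivAt_Ai' hω')
  obtain ⟨hv, hv'⟩ := forall_and.1 (hasDerivAt_comp_mul_of_airy hasDerivAt_Ai hasDerivAt_Ai' hω)
  have h3 : (Real.sqrt 3 : ℂ) * Real.sqrt 3 = 3 := by
    exact_mod_cast Real.mul_self_sqrt three_pos.le
  calc _ = _ := is_const_wronskian_of_hasDerivAt hu hu' hv hv' z 0
    _ = (Complex.exp (-α * Complex.I) - Complex.exp (α * Complex.I)) * (Ai 0 * Ai' 0) := by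
      simp only [mul_zero]
      ring
    _ = Complex.I / (2 * Real.pi) := by
      rw [Ai_zero, Ai'_zero, exp_neg_alpha_mul_I_sub_exp_alpha_mul_I,
        airyCoeff_zero_mul_airyCoeff_one]
      linear_combination (Complex.I / (6 * Real.pi)) * h3

end
end

section
/- Define the Dawson-type integral D(s) := ∫₀^s exp(y² − s²) dy and, for ε > 0 and σ > 0, J_ε(σ) := ∫₀^ε ( ∫₀^x exp( σ·(y² − x²) ) dy ) dx. Then there exist constants C > 0 and ε₀ > 0 such that for every ε ∈ (0, ε₀) and every σ ≥ ε^{-3}, | J_ε(σ) − (log σ)/(4σ) | ≤ C·(1 + |log ε|)/σ. -/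
noncomputable section

open MeasureTheory

/-- The Dawson-type integral `D(s) = ∫₀^s exp(y² − s²) dy`. -/
def Dawson (s : ℝ) : ℝ := ∫ y in Set.Ioc (0:ℝ) s, Real.exp (y ^ 2 - s ^ 2)

/-- `J_ε(σ) = ∫₀^ε ∫₀^x exp(σ(y² − x²)) dy dx`. -/
def J (ε σ : ℝ) : ℝ :=
  ∫ x in Set.Ioc (0:ℝ) ε, ∫ y in Set.Ioc (0:ℝ) x, Real.exp (σ * (y ^ 2 - x ^ 2))

/-!
Substituting `y ↦ y/√σ` and then `x ↦ x/√σ` gives `J_ε(σ) = σ⁻¹ ∫₀^{√σ ε} D`. Writing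
`y² − s² = 2s(y − s) + (s − y)²` and using `1 ≤ e^{t²} ≤ 1 + t² e^{t²}` squeezes `D(s)` between
`∫₀^s e^{2s(y−s)} dy = (1 − e^{−2s²})/(2s)` and that plus `∫₀^s t² e^{−st} dt ≤ 2/s³`, so
`|D(s) − 1/(2s)| ≤ 2/s³`. Hence `∫₀^S D = (log S)/2 + O(1)` for `S ≥ 1`, and `σ ≥ ε⁻³` makes
`S = √σ ε ≥ 1` with `log S = (log σ)/2 + log ε`.
-/

open Real intervalIntegral Set

lemma exp_two_mul_sub_le_exp_sq_sub_sq (s y : ℝ) : exp (2 * s * (y - s)) ≤ exp (y ^ 2 - s ^ 2) :=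
  exp_le_exp.mpr (by nlinarith [sq_nonneg (y - s)])

lemma exp_sq_sub_sq_le_add {s y : ℝ} (hy : 0 ≤ y) (hys : y ≤ s) :
    exp (y ^ 2 - s ^ 2) ≤ exp (2 * s * (y - s)) + (s - y) ^ 2 * exp (s * (y - s)) := by
  have hsplit : exp (y ^ 2 - s ^ 2) = exp (2 * s * (y - s)) * exp ((s - y) ^ 2) := by
    rw [← exp_add]; ring_nf
  have hsq : exp ((s - y) ^ 2) ≤ 1 + (s - y) ^ 2 * exp ((s - y) ^ 2) := by
    have h := mul_le_mul_of_nonneg_left (add_one_le_exp (-(s - y) ^ 2)) (exp_pos ((s - y) ^ 2)).le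
    rw [← exp_add, add_neg_cancel, exp_zero] at h
    linarith
  have hdecay : exp (y ^ 2 - s ^ 2) ≤ exp (s * (y - s)) :=
    exp_le_exp.mpr (by nlinarith)
  calc exp (y ^ 2 - s ^ 2)
      ≤ exp (2 * s * (y - s)) * (1 + (s - y) ^ 2 * exp ((s - y) ^ 2)) := by
        rw [hsplit]; gcongr
    _ = exp (2 * s * (y - s)) + (s - y) ^ 2 * exp (y ^ 2 - s ^ 2) := by
        rw [hsplit]; ring
    _ ≤ exp (2 * s * (y - s)) + (s - y) ^ 2 * exp (s * (y - s)) := by gcongr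

lemma integral_exp_two_mul_sub {s : ℝ} (hs : s ≠ 0) :
    ∫ y in (0:ℝ)..s, exp (2 * s * (y - s)) = (1 - exp (-(2 * s ^ 2))) / (2 * s) := by
  have hderiv : ∀ y ∈ uIcc 0 s,
      HasDerivAt (fun y => exp (2 * s * (y - s)) / (2 * s)) (exp (2 * s * (y - s))) y := by
    intro y _
    refine ((((hasDerivAt_id y).sub_const s).const_mul (2 * s)).exp.div_const (2 * s)).congr_deriv
      ?_
    simp only [id]
    field_simp
  rw [integral_eq_sub_of_hasDerivAt hderiv (Continuous.intervalIntegrable (by fun_prop) _ _)]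
  rw [show 2 * s * (0 - s) = -(2 * s ^ 2) by ring, sub_self, mul_zero, exp_zero]
  ring

lemma integral_sub_sq_mul_exp_le {s : ℝ} (hs : 0 < s) :
    ∫ y in (0:ℝ)..s, (s - y) ^ 2 * exp (s * (y - s)) ≤ 2 / s ^ 3 := by
  set F : ℝ → ℝ := fun y => exp (s * (y - s)) * ((s - y) ^ 2 / s + 2 * (s - y) / s ^ 2 + 2 / s ^ 3)
  have hderiv : ∀ y ∈ uIcc 0 s, HasDerivAt F ((s - y) ^ 2 * exp (s * (y - s))) y := by
    intro y _
    have hu : HasDerivAt (fun y => s - y) (-1) y := by simpa using (hasDerivAt_id y).const_sub s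
    refine ((((hasDerivAt_id y).sub_const s).const_mul s).exp.mul
      ((((hu.pow 2).div_const s).add ((hu.const_mul 2).div_const (s ^ 2))).add_const
        (2 / s ^ 3))).congr_deriv ?_
    simp only [id, Pi.add_apply, Pi.pow_apply]
    field_simp
    ring
  rw [integral_eq_sub_of_hasDerivAt hderiv (Continuous.intervalIntegrable (by fun_prop) _ _)]
  have hF0 : 0 ≤ F 0 := by positivity
  have hFs : F s = 2 / s ^ 3 := by simp [F]
  linarith

lemma dawson_eq_intervalIntegral {s : ℝ} (hs : 0 ≤ s) :
    Dawson s = ∫ y in (0:ℝ)..s, exp (y ^ 2 - s ^ 2) :=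
  (integral_of_le hs).symm

lemma dawson_nonneg (s : ℝ) : 0 ≤ Dawson s :=
  setIntegral_nonneg measurableSet_Ioc fun _ _ => (exp_pos _).le

lemma dawson_le_self {s : ℝ} (hs : 0 ≤ s) : Dawson s ≤ s := by
  rw [dawson_eq_intervalIntegral hs]
  calc ∫ y in (0:ℝ)..s, exp (y ^ 2 - s ^ 2) ≤ ∫ _ in (0:ℝ)..s, (1:ℝ) :=
        integral_mono_on hs (Continuous.intervalIntegrable (by fun_prop) _ _)
          intervalIntegrable_const fun y hy => exp_le_one_iff.mpr (by nlinarith [hy.1, hy.2])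
    _ = s := by simp

lemma continuousOn_dawson : ContinuousOn Dawson (Ici 0) := by
  have hprim : Continuous fun s => ∫ y in (0:ℝ)..s, exp (y ^ 2) :=
    continuous_primitive (fun _ _ => Continuous.intervalIntegrable (by fun_prop) _ _) 0
  refine (((by fun_prop : Continuous fun s : ℝ => exp (-s ^ 2))).mul hprim).continuousOn.congr
    fun s hs => ?_
  rw [Pi.mul_apply, dawson_eq_intervalIntegral (mem_Ici.mp hs),
    ← intervalIntegral.integral_const_mul]
  simp only [← exp_add, neg_add_eq_sub]

lemma abs_dawson_sub_inv_le {s : ℝ} (hs : 0 < s) : |Dawson s - 1 / (2 * s)| ≤ 2 / s ^ 3 := by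
  have hint : ∀ f : ℝ → ℝ, Continuous f → IntervalIntegrable f volume 0 s :=
    fun f hf => hf.intervalIntegrable _ _
  have hlower : ∫ y in (0:ℝ)..s, exp (2 * s * (y - s)) ≤ Dawson s := by
    rw [dawson_eq_intervalIntegral hs.le]
    exact integral_mono_on hs.le (hint _ (by fun_prop)) (hint _ (by fun_prop))
      fun y _ => exp_two_mul_sub_le_exp_sq_sub_sq s y
  have hupper : Dawson s ≤ (∫ y in (0:ℝ)..s, exp (2 * s * (y - s))) +
      ∫ y in (0:ℝ)..s, (s - y) ^ 2 * exp (s * (y - s)) := by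
    rw [dawson_eq_intervalIntegral hs.le,
      ← integral_add (hint _ (by fun_prop)) (hint _ (by fun_prop))]
    exact integral_mono_on hs.le (hint _ (by fun_prop)) (hint _ (by fun_prop))
      fun y hy => exp_sq_sub_sq_le_add hy.1 hy.2
  rw [integral_exp_two_mul_sub hs.ne', sub_div] at hlower hupper
  have hsq := integral_sub_sq_mul_exp_le hs
  have htail_nonneg : 0 ≤ exp (-(2 * s ^ 2)) / (2 * s) := by positivity
  have htail_le : exp (-(2 * s ^ 2)) / (2 * s) ≤ 2 / s ^ 3 := by
    have hexp : exp (-(2 * s ^ 2)) ≤ 1 / (2 * s ^ 2) := by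
      rw [exp_neg, one_div]
      exact inv_anti₀ (by positivity) (by linarith [add_one_le_exp (2 * s ^ 2)])
    calc exp (-(2 * s ^ 2)) / (2 * s) ≤ 1 / (2 * s ^ 2) / (2 * s) := by gcongr
      _ = (1 / 4) / s ^ 3 := by field_simp; ring
      _ ≤ 2 / s ^ 3 := by gcongr; norm_num
  rw [abs_le]
  constructor <;> linarith

lemma integral_exp_mul_sq_sub_sq {σ : ℝ} (hσ : 0 < σ) (x : ℝ) (hx : 0 ≤ x) :
    ∫ y in (0:ℝ)..x, exp (σ * (y ^ 2 - x ^ 2)) = Dawson (√σ * x) / √σ := by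
  have hc : √σ ≠ 0 := (sqrt_pos.mpr hσ).ne'
  have hscale : ∀ y, exp (σ * (y ^ 2 - x ^ 2)) = exp ((√σ * y) ^ 2 - (√σ * x) ^ 2) := fun y => by
    rw [mul_pow, mul_pow, sq_sqrt hσ.le, mul_sub]
  simp only [hscale]
  rw [integral_comp_mul_left (fun t => exp (t ^ 2 - (√σ * x) ^ 2)) hc, mul_zero,
    dawson_eq_intervalIntegral (by positivity), smul_eq_mul, inv_mul_eq_div]

lemma J_eq_integral_dawson {ε σ : ℝ} (hε : 0 ≤ ε) (hσ : 0 < σ) :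
    J ε σ = (∫ s in (0:ℝ)..√σ * ε, Dawson s) / σ := by
  have hc : √σ ≠ 0 := (sqrt_pos.mpr hσ).ne'
  calc J ε σ = ∫ x in (0:ℝ)..ε, Dawson (√σ * x) / √σ := by
        rw [J, integral_of_le hε]
        refine setIntegral_congr_fun measurableSet_Ioc fun x hx => ?_
        rw [← integral_of_le hx.1.le, integral_exp_mul_sq_sub_sq hσ x hx.1.le]
    _ = (∫ s in (0:ℝ)..√σ * ε, Dawson s) / σ := by
        rw [intervalIntegral.integral_div, integral_comp_mul_left Dawson hc, mul_zero, smul_eq_mul]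
        field_simp
        rw [sq_sqrt hσ.le, mul_comm]

lemma uIcc_one_subset_Ioi_zero {S : ℝ} (hS : 1 ≤ S) : uIcc 1 S ⊆ Ioi 0 := by
  rw [uIcc_of_le hS]
  exact fun s hs => lt_of_lt_of_le one_pos hs.1

lemma intervalIntegrable_two_div_cube {S : ℝ} (hS : 1 ≤ S) :
    IntervalIntegrable (fun s : ℝ => 2 / s ^ 3) volume 1 S :=
  (continuousOn_const.div (continuousOn_pow 3) fun _ hs =>
    (pow_pos (uIcc_one_subset_Ioi_zero hS hs) 3).ne').intervalIntegrable

lemma integral_two_div_cube_le_one {S : ℝ} (hS : 1 ≤ S) : ∫ s in (1:ℝ)..S, 2 / s ^ 3 ≤ 1 := by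
  have hderiv : ∀ s ∈ uIcc 1 S, HasDerivAt (fun s => -1 / s ^ 2) (2 / s ^ 3) s := by
    intro s hs
    have hs0 : s ≠ 0 := (uIcc_one_subset_Ioi_zero hS hs).ne'
    exact ((hasDerivAt_const s (-1 : ℝ)).div (hasDerivAt_pow 2 s) (pow_ne_zero 2 hs0)).congr_deriv
      (by field_simp; ring)
  rw [integral_eq_sub_of_hasDerivAt hderiv (intervalIntegrable_two_div_cube hS)]
  have : -1 / S ^ 2 ≤ 0 := div_nonpos_of_nonpos_of_nonneg (by norm_num) (by positivity)
  norm_num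
  linarith

lemma integral_one_div_two_mul {S : ℝ} (hS : 0 < S) : ∫ s in (1:ℝ)..S, 1 / (2 * s) = log S / 2 := by
  simp only [one_div, mul_inv, intervalIntegral.integral_const_mul,
    integral_inv_of_pos one_pos hS, div_one]
  ring

lemma abs_integral_dawson_sub_log_le {S : ℝ} (hS : 1 ≤ S) :
    |(∫ s in (0:ℝ)..S, Dawson s) - log S / 2| ≤ 3 / 2 := by
  have hint : ∀ a b : ℝ, 0 ≤ a → 0 ≤ b → IntervalIntegrable Dawson volume a b := fun a b ha hb =>
    (continuousOn_dawson.mono fun _ hs => (le_min ha hb).trans hs.1).intervalIntegrable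
  have hinv : IntervalIntegrable (fun s : ℝ => 1 / (2 * s)) volume 1 S := by
    refine ContinuousOn.intervalIntegrable (continuousOn_const.div (by fun_prop) fun s hs => ?_)
    have : 0 < s := uIcc_one_subset_Ioi_zero hS hs
    positivity
  have hsplit := integral_add_adjacent_intervals (hint 0 1 le_rfl zero_le_one)
    (hint 1 S zero_le_one (by linarith))
  have hnear_nonneg : 0 ≤ ∫ s in (0:ℝ)..1, Dawson s :=
    integral_nonneg zero_le_one fun s _ => dawson_nonneg s
  have hnear_le : ∫ s in (0:ℝ)..1, Dawson s ≤ 1 / 2 := by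
    calc ∫ s in (0:ℝ)..1, Dawson s ≤ ∫ s in (0:ℝ)..1, s :=
          integral_mono_on zero_le_one (hint 0 1 le_rfl zero_le_one)
            (Continuous.intervalIntegrable continuous_id _ _) fun s hs => dawson_le_self hs.1
      _ = 1 / 2 := by norm_num [integral_id]
  have hfar : |(∫ s in (1:ℝ)..S, Dawson s) - ∫ s in (1:ℝ)..S, 1 / (2 * s)| ≤ 1 := by
    rw [← intervalIntegral.integral_sub (hint 1 S zero_le_one (by linarith)) hinv, ← norm_eq_abs]
    refine (norm_integral_le_of_norm_le hS (ae_of_all _ fun s hs => ?_) ?_).trans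
      (integral_two_div_cube_le_one hS)
    · exact abs_dawson_sub_inv_le (by linarith [hs.1])
    · exact intervalIntegrable_two_div_cube hS
  rw [integral_one_div_two_mul (by linarith)] at hfar
  rw [abs_le] at hfar ⊢
  constructor <;> linarith [hfar.1, hfar.2]

lemma one_le_sqrt_mul_of_rpow_neg_three_le {ε σ : ℝ} (hε : 0 < ε) (hε1 : ε ≤ 1)
    (hσ : ε ^ (-(3:ℝ)) ≤ σ) : 1 ≤ √σ * ε := by
  rw [rpow_neg hε.le, inv_le_iff_one_le_mul₀ (by positivity)] at hσ
  have hσε : 1 ≤ σ * ε ^ 2 := by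
    norm_cast at hσ
    nlinarith [pow_le_pow_of_le_one hε.le hε1 (by norm_num : 2 ≤ 3), pow_pos hε 3]
  calc 1 ≤ √(σ * ε ^ 2) := one_le_sqrt.mpr hσε
    _ = √σ * ε := by rw [sqrt_mul' _ (by positivity), sqrt_sq hε.le]

/-- There are `C > 0` and `ε₀ > 0` such that for every `ε ∈ (0,ε₀)` and every `σ ≥ ε^{-3}`,
`|J_ε(σ) − (log σ)/(4σ)| ≤ C (1 + |log ε|)/σ`. -/
theorem J_asymptotics :
    ∃ C > (0:ℝ), ∃ ε₀ > (0:ℝ), ∀ ε : ℝ, 0 < ε → ε < ε₀ → ∀ σ : ℝ, ε ^ (-(3:ℝ)) ≤ σ →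
      |J ε σ - Real.log σ / (4 * σ)| ≤ C * (1 + |Real.log ε|) / σ := by
  refine ⟨2, two_pos, 1, one_pos, fun ε hε hε1 σ hσε => ?_⟩
  have hσ : 0 < σ := (rpow_pos_of_pos hε _).trans_le hσε
  have hS := one_le_sqrt_mul_of_rpow_neg_three_le hε hε1.le hσε
  have hlog : log (√σ * ε) = log σ / 2 + log ε := by
    rw [log_mul (by positivity) hε.ne', log_sqrt hσ.le]
  have hbound := abs_integral_dawson_sub_log_le hS
  rw [hlog] at hbound
  have hsplit : J ε σ - log σ / (4 * σ) =
      ((∫ s in (0:ℝ)..√σ * ε, Dawson s) - (log σ / 2 + log ε) / 2 + log ε / 2) / σ := by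
    rw [J_eq_integral_dawson hε.le hσ]
    field_simp
    ring
  rw [hsplit, abs_div, abs_of_pos hσ]
  gcongr
  calc _ ≤ 3 / 2 + |log ε / 2| := (abs_add_le _ _).trans (by gcongr)
    _ ≤ 2 * (1 + |log ε|) := by rw [abs_div, abs_two]; linarith [abs_nonneg (log ε)]

end
end
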